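/- (Theorem 1.) Fix n ≥ 1 and T ≥ 0. Let u : [0,T] → ℝ be continuous and let w : U × [0,T] → ℂ satisfy: w(z,0) = z; for each t, z ↦ w(z,t) is holomorphic on U with |w(z,t)| < 1, w(0,t) = 0, and ∂_z w(z,t) ≠ 0; for each z, t ↦ w(z,t) is differentiable with ∂w/∂t = −w(e^{iu(t)}+w)/(e^{iu(t)}−w); and for each k the k-th Taylor coefficient a_k(t) of w(·,t) at 0 is differentiable in t with derivative equal to the k-th Taylor coefficient of ∂_t w(·,t), and likewise for the Taylor coefficients of z/∂_z w(z,t). Set a(t) = (a_1(t),…,a_n(t)). Let β ∈ ℂ^n and let q : [0,T] → ℂ^n be the differentiable solution of the adjoint system q'(t) = q(t) + 2∑_{s=1}^{n−1} e^{−isu(t)}(s+1)(A(a(t))ᵀ)^s q(t) with terminal condition q(T) = β. Then for all t ∈ [0,T] and all 1 ≤ k ≤ n, q_k(t) = c_{n−k+1}(t), where c_j(t) denotes the j-th Taylor coefficient at 0 of the holomorphic function z ↦ (β_n z + β_{n−1} z² + ⋯ + β_1 z^n) · ∂_z w(z,T) / ∂_z w(z,t). -/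

import Mathlib

open Complex Metric

/-- The `k`-th Taylor coefficient of `f` at `0`. -/
noncomputable def taylorCoeff (f : ℂ → ℂ) (k : ℕ) : ℂ :=
  iteratedDeriv k f 0 / Nat.factorial k

/-- The lower-triangular nilpotent Toeplitz matrix `A(a)` with `A(a)_{j,k} = a_{j-k}`
(1-indexed) for `j > k` and `0` otherwise. -/
noncomputable def toeplitzA {n : ℕ} (a : Fin n → ℂ) : Matrix (Fin n) (Fin n) ℂ :=
  Matrix.of fun j k =>
    if _ : (k : ℕ) < (j : ℕ) then a ⟨(j : ℕ) - (k : ℕ) - 1, by have := j.isLt; omega⟩ else 0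

/-- The Löwner kernel `p(ζ, u) = (e^{iu} + ζ)/(e^{iu} - ζ)`. -/
noncomputable def lkernel (ζ : ℂ) (u : ℝ) : ℂ :=
  (Complex.exp (u * Complex.I) + ζ) / (Complex.exp (u * Complex.I) - ζ)

/-!
Write the function whose coefficients appear as `F_t = G · ψ_t` with `ψ_t(z) = z / ∂_z w(z,t)` and
`G` independent of `t`. By the assumed evolution of the coefficients of `ψ_t`, the `j`-th
coefficient of `F_t` has derivative `[z^j] F_t · M(w(z,t))`, where
`M(ζ) = ∂_ζ (ζ p(ζ, u)) = 1 + 2 ∑_{s ≥ 1} (s+1) e^{-isu} ζ^s`. Multiplication by `w(·,t)` acts on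
the coefficient vector `(c_n, …, c_1)` as `A(a(t))ᵀ`, and since `F_t(0) = w(0,t) = 0` the terms
with `s ≥ j` do not reach degree `j`; so `k ↦ c_{n-k+1}(t)` solves the adjoint system, with
value `β` at `t = T`. The adjoint system is the identity plus a strictly upper triangular
part, so by downward induction on the component its solutions are determined by their
terminal value.
-/

open Topology

section TaylorCoeff

variable {f g : ℂ → ℂ}

theorem taylorCoeff_congr (h : f =ᶠ[𝓝 0] g) (k : ℕ) : taylorCoeff f k = taylorCoeff g k := by
  simp only [taylorCoeff, h.iteratedDeriv_eq]

@[simp]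
theorem taylorCoeff_zero (f : ℂ → ℂ) : taylorCoeff f 0 = f 0 := by
  simp [taylorCoeff]

theorem taylorCoeff_add (hf : AnalyticAt ℂ f 0) (hg : AnalyticAt ℂ g 0) (k : ℕ) :
    taylorCoeff (fun z => f z + g z) k = taylorCoeff f k + taylorCoeff g k := by
  simp only [taylorCoeff, iteratedDeriv_fun_add hf.contDiffAt hg.contDiffAt, add_div]

theorem taylorCoeff_const_mul (c : ℂ) (f : ℂ → ℂ) (k : ℕ) :
    taylorCoeff (fun z => c * f z) k = c * taylorCoeff f k := by
  simp only [taylorCoeff, iteratedDeriv_const_mul_field, mul_div_assoc]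

theorem taylorCoeff_sum {ι : Type*} (s : Finset ι) {F : ι → ℂ → ℂ}
    (hF : ∀ i ∈ s, AnalyticAt ℂ (F i) 0) (k : ℕ) :
    taylorCoeff (fun z => ∑ i ∈ s, F i z) k = ∑ i ∈ s, taylorCoeff (F i) k := by
  simp only [taylorCoeff, iteratedDeriv_fun_sum fun i hi => (hF i hi).contDiffAt, Finset.sum_div]

theorem taylorCoeff_mul (hf : AnalyticAt ℂ f 0) (hg : AnalyticAt ℂ g 0) (k : ℕ) :
    taylorCoeff (fun z => f z * g z) k =
      ∑ i ∈ Finset.range (k + 1), taylorCoeff f i * taylorCoeff g (k - i) := by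
  simp only [taylorCoeff, iteratedDeriv_fun_mul hf.contDiffAt hg.contDiffAt, Finset.sum_div]
  refine Finset.sum_congr rfl fun i hi => ?_
  have hik : i ≤ k := Nat.lt_succ_iff.mp (Finset.mem_range.mp hi)
  rw [← Nat.choose_mul_factorial_mul_factorial hik]
  have := (Nat.choose_pos hik).ne'
  have := i.factorial_ne_zero
  have := (k - i).factorial_ne_zero
  push_cast
  field_simp

theorem taylorCoeff_monomial (m k : ℕ) :
    taylorCoeff (fun z => z ^ m) k = if k = m then 1 else 0 := by
  simp only [taylorCoeff, iteratedDeriv_fun_pow_zero]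
  split_ifs <;> simp_all [Nat.factorial_ne_zero]

theorem taylorCoeff_mul_eq_zero_of_lt (hf : AnalyticAt ℂ f 0) (hg : AnalyticAt ℂ g 0) {a b m : ℕ}
    (hfa : ∀ i < a, taylorCoeff f i = 0) (hgb : ∀ i < b, taylorCoeff g i = 0) (hm : m < a + b) :
    taylorCoeff (fun z => f z * g z) m = 0 := by
  rw [taylorCoeff_mul hf hg]
  refine Finset.sum_eq_zero fun i hi => ?_
  rcases lt_or_ge i a with h | h
  · rw [hfa i h, zero_mul]
  · rw [hgb (m - i) (by grind), mul_zero]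

theorem taylorCoeff_pow_eq_zero_of_lt (hf : AnalyticAt ℂ f 0) (hf0 : f 0 = 0) {s m : ℕ}
    (hm : m < s) : taylorCoeff (fun z => f z ^ s) m = 0 := by
  induction s generalizing m with
  | zero => omega
  | succ s ih =>
    simp only [pow_succ']
    exact taylorCoeff_mul_eq_zero_of_lt (a := 1) hf (hf.fun_pow s) (by simp [hf0])
      (fun i hi => ih hi) (by omega)

theorem taylorCoeff_pow_mul_eq_zero_of_le (hf : AnalyticAt ℂ f 0) (hf0 : f 0 = 0)
    (hg : AnalyticAt ℂ g 0) (hg0 : g 0 = 0) {s m : ℕ} (hm : m ≤ s) :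
    taylorCoeff (fun z => f z ^ s * g z) m = 0 :=
  taylorCoeff_mul_eq_zero_of_lt (b := 1) (hf.fun_pow s) hg
    (fun _ hi => taylorCoeff_pow_eq_zero_of_lt hf hf0 hi) (by simp [hg0]) (by omega)

end TaylorCoeff

theorem kernel_expansion {x : ℂ} (hx : x ≠ 1) {j : ℕ} (hj : 1 ≤ j) :
    (1 + x) / (1 - x) + 2 * x / (1 - x) ^ 2 =
      1 + 2 * ∑ s ∈ Finset.Icc 1 (j - 1), ((s : ℂ) + 1) * x ^ s +
        x ^ j * (2 * ((1 - x)⁻¹ ^ 2 + j * (1 - x)⁻¹)) := by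
  have hx' : 1 - x ≠ 0 := sub_ne_zero.mpr hx.symm
  induction j, hj using Nat.le_induction with
  | base =>
    simp only [Nat.sub_self, Finset.Icc_eq_empty_of_lt zero_lt_one, Finset.sum_empty]
    field_simp
    ring
  | succ j hj ih =>
    rw [ih, Nat.add_sub_cancel, ← Nat.sub_add_cancel hj,
      Finset.sum_Icc_succ_top (by omega), Nat.sub_add_cancel hj]
    push_cast
    field_simp
    ring

theorem taylorCoeff_mul_kernel {F f : ℂ → ℂ} (hF : AnalyticAt ℂ F 0) (hF0 : F 0 = 0)
    (hf : AnalyticAt ℂ f 0) (hf0 : f 0 = 0) {e : ℂ} (he : e ≠ 0) {j : ℕ} (hj : 1 ≤ j) :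
    taylorCoeff (fun z => F z * ((e + f z) / (e - f z) + 2 * e * f z / (e - f z) ^ 2)) j =
      taylorCoeff F j + 2 * ∑ s ∈ Finset.Icc 1 (j - 1),
        ((s : ℂ) + 1) * e⁻¹ ^ s * taylorCoeff (fun z => f z ^ s * F z) j := by
  set ρ : ℂ → ℂ := fun z => 2 * ((1 - f z / e)⁻¹ ^ 2 + j * (1 - f z / e)⁻¹)
  set S : ℂ → ℂ := fun z => ∑ s ∈ Finset.Icc 1 (j - 1),
    2 * ((s + 1) * e⁻¹ ^ s) * (f z ^ s * F z)
  set R : ℂ → ℂ := fun z => e⁻¹ ^ j * (f z ^ j * (F z * ρ z))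
  have hρ : AnalyticAt ℂ ρ 0 := by
    have : AnalyticAt ℂ (fun z => (1 - f z / e)⁻¹) 0 :=
      (analyticAt_const.sub (hf.div analyticAt_const he)).inv (by simp [hf0])
    exact analyticAt_const.mul ((this.pow 2).add (analyticAt_const.mul this))
  have hterm : ∀ s, AnalyticAt ℂ (fun z => f z ^ s * F z) 0 := fun s => (hf.fun_pow s).mul hF
  have hS : AnalyticAt ℂ S 0 :=
    Finset.analyticAt_fun_sum _ fun s _ => analyticAt_const.mul (hterm s)
  have hR : AnalyticAt ℂ R 0 := analyticAt_const.mul ((hf.fun_pow j).mul (hF.mul hρ))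
  have hexpand : (fun z => F z * ((e + f z) / (e - f z) + 2 * e * f z / (e - f z) ^ 2)) =ᶠ[𝓝 0]
      fun z => F z + (S z + R z) := by
    filter_upwards [hf.continuousAt.eventually_ne (hf0 ▸ he.symm)] with z hz
    have hx : f z / e ≠ 1 := fun h => hz ((div_eq_one_iff_eq he).mp h)
    have hkernel : (e + f z) / (e - f z) + 2 * e * f z / (e - f z) ^ 2 =
        (1 + f z / e) / (1 - f z / e) + 2 * (f z / e) / (1 - f z / e) ^ 2 := by
      have : e - f z ≠ 0 := sub_ne_zero.mpr hz.symm
      field_simp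
    have hsum : S z = F z * (2 * ∑ s ∈ Finset.Icc 1 (j - 1), ((s : ℂ) + 1) * (f z / e) ^ s) := by
      rw [Finset.mul_sum, Finset.mul_sum]
      refine Finset.sum_congr rfl fun s _ => ?_
      ring
    rw [hkernel, kernel_expansion hx hj, hsum]
    ring
  have hRcoef : taylorCoeff R j = 0 := by
    rw [taylorCoeff_const_mul,
      taylorCoeff_pow_mul_eq_zero_of_le hf hf0 (hF.fun_mul hρ) (by simp [hF0]) le_rfl, mul_zero]
  rw [taylorCoeff_congr hexpand, taylorCoeff_add (g := fun z => S z + R z) hF (hS.add hR),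
    taylorCoeff_add hS hR, hRcoef, add_zero,
    taylorCoeff_sum _ fun s _ => analyticAt_const.fun_mul (hterm s), Finset.mul_sum]
  refine congrArg _ (Finset.sum_congr rfl fun s _ => ?_)
  rw [taylorCoeff_const_mul]
  ring

theorem analyticAt_lkernel_add {f : ℂ → ℂ} (hf : AnalyticAt ℂ f 0) (hf0 : f 0 = 0) (θ : ℝ) :
    AnalyticAt ℂ (fun z => lkernel (f z) θ +
      2 * Complex.exp (θ * Complex.I) * f z / (Complex.exp (θ * Complex.I) - f z) ^ 2) 0 := by
  have he : Complex.exp (θ * Complex.I) - f 0 ≠ 0 := by simp [hf0, Complex.exp_ne_zero]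
  simp only [lkernel]
  fun_prop (disch := simp [he])

section Toeplitz

open Matrix

variable {n : ℕ} {a : Fin n → ℂ} {f g : ℂ → ℂ}

theorem toeplitzA_apply_of_le (a : Fin n → ℂ) {j k : Fin n} (hjk : j ≤ k) :
    toeplitzA a j k = 0 := by
  simp only [toeplitzA, Matrix.of_apply, dif_neg (not_lt.mpr (Fin.le_def.mp hjk))]

theorem toeplitzA_pow_apply_of_le (a : Fin n → ℂ) {s : ℕ} (hs : 1 ≤ s) {j k : Fin n}
    (hjk : j ≤ k) : (toeplitzA a ^ s) j k = 0 := by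
  induction s, hs using Nat.le_induction generalizing j k with
  | base => rw [pow_one, toeplitzA_apply_of_le a hjk]
  | succ s hs ih =>
    rw [pow_succ, Matrix.mul_apply]
    refine Finset.sum_eq_zero fun l _ => ?_
    rcases le_or_gt j l with hjl | hlj
    · rw [ih hjl, zero_mul]
    · rw [toeplitzA_apply_of_le a (hlj.le.trans hjk), mul_zero]

-- Also valid for `j ≤ k`: the truncated `j - k` is `0`, and `taylorCoeff f 0 = f 0 = 0`.
theorem toeplitzA_apply_eq_taylorCoeff (hf0 : f 0 = 0)
    (ha : ∀ k : Fin n, a k = taylorCoeff f (k + 1)) (j k : Fin n) :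
    toeplitzA a j k = taylorCoeff f (j - k) := by
  simp only [toeplitzA, Matrix.of_apply]
  split_ifs with h
  · rw [ha]
    congr 1
    simp only
    omega
  · simp [Nat.sub_eq_zero_of_le (not_lt.mp h), hf0]

theorem toeplitzA_transpose_mulVec_taylorCoeff (hf : AnalyticAt ℂ f 0) (hf0 : f 0 = 0)
    (ha : ∀ k : Fin n, a k = taylorCoeff f (k + 1)) (hg : AnalyticAt ℂ g 0) (hg0 : g 0 = 0) :
    (toeplitzA a)ᵀ *ᵥ (fun l : Fin n => taylorCoeff g (n - l)) =
      fun k : Fin n => taylorCoeff (fun z => f z * g z) (n - k) := by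
  funext k
  set φ : ℕ → ℂ := fun l => taylorCoeff f (l - k) * taylorCoeff g (n - l)
  have hlow : ∑ l ∈ Finset.range k, φ l = 0 :=
    Finset.sum_eq_zero fun l hl => by
      simp [φ, Nat.sub_eq_zero_of_le (Finset.mem_range.mp hl).le, hf0]
  calc ((toeplitzA a)ᵀ *ᵥ fun l : Fin n => taylorCoeff g (n - l)) k
      = ∑ l ∈ Finset.range n, φ l := by
        simp only [Matrix.mulVec, dotProduct, Matrix.transpose_apply,
          toeplitzA_apply_eq_taylorCoeff hf0 ha]
        exact Fin.sum_univ_eq_sum_range φ n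
    _ = ∑ l ∈ Finset.range (n + 1), φ l := by simp [Finset.sum_range_succ, φ, hg0]
    _ = ∑ l ∈ Finset.Ico (k : ℕ) (n + 1), φ l := by
        rw [← Finset.sum_range_add_sum_Ico φ (by omega : (k : ℕ) ≤ n + 1), hlow, zero_add]
    _ = taylorCoeff (fun z => f z * g z) (n - k) := by
        rw [Finset.sum_Ico_eq_sum_range, taylorCoeff_mul hf hg, Nat.sub_add_comm k.isLt.le]
        refine Finset.sum_congr rfl fun i _ => ?_
        simp only [φ, Nat.add_sub_cancel_left, Nat.sub_add_eq]

theorem toeplitzA_transpose_pow_mulVec_taylorCoeff (hf : AnalyticAt ℂ f 0) (hf0 : f 0 = 0)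
    (ha : ∀ k : Fin n, a k = taylorCoeff f (k + 1)) (hg : AnalyticAt ℂ g 0) (hg0 : g 0 = 0)
    (s : ℕ) : (toeplitzA a)ᵀ ^ s *ᵥ (fun l : Fin n => taylorCoeff g (n - l)) =
      fun k : Fin n => taylorCoeff (fun z => f z ^ s * g z) (n - k) := by
  induction s generalizing g with
  | zero => simp
  | succ s ih =>
    rw [pow_succ, ← Matrix.mulVec_mulVec,
      toeplitzA_transpose_mulVec_taylorCoeff hf hf0 ha hg hg0,
      ih (hf.fun_mul hg) (by simp [hg0])]
    simp only [pow_succ, mul_assoc]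

end Toeplitz

section Adjoint

open Matrix

variable {n : ℕ}

noncomputable def adjointDrift (a : Fin n → ℂ) (θ : ℝ) (x : Fin n → ℂ) (k : Fin n) : ℂ :=
  2 * ∑ s ∈ Finset.Icc 1 (n - 1), Complex.exp (-(s : ℂ) * (θ : ℂ) * Complex.I) * ((s : ℂ) + 1) *
    (((toeplitzA a).transpose ^ s).mulVec x) k

theorem adjointDrift_congr (a : Fin n → ℂ) (θ : ℝ) {x y : Fin n → ℂ} {k : Fin n}
    (hxy : ∀ l, k < l → x l = y l) : adjointDrift a θ x k = adjointDrift a θ y k := by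
  unfold adjointDrift
  refine congrArg _ (Finset.sum_congr rfl fun s hs => congrArg _ ?_)
  simp only [mulVec, dotProduct, ← transpose_pow, transpose_apply]
  refine Finset.sum_congr rfl fun l _ => ?_
  rcases le_or_gt l k with hlk | hkl
  · rw [toeplitzA_pow_apply_of_le a (Finset.mem_Icc.mp hs).1 hlk, zero_mul, zero_mul]
  · rw [hxy l hkl]

theorem taylorCoeff_mul_lkernel_eq_add_adjointDrift {a : Fin n → ℂ} {F f : ℂ → ℂ}
    (hF : AnalyticAt ℂ F 0) (hF0 : F 0 = 0) (hf : AnalyticAt ℂ f 0) (hf0 : f 0 = 0)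
    (ha : ∀ k : Fin n, a k = taylorCoeff f (k + 1)) (θ : ℝ) (k : Fin n) :
    taylorCoeff (fun z => F z * (lkernel (f z) θ +
        2 * Complex.exp (θ * Complex.I) * f z / (Complex.exp (θ * Complex.I) - f z) ^ 2)) (n - k) =
      taylorCoeff F (n - k) + adjointDrift a θ (fun l => taylorCoeff F (n - l)) k := by
  simp only [lkernel]
  rw [taylorCoeff_mul_kernel hF hF0 hf hf0 (Complex.exp_ne_zero _) (by omega), adjointDrift]
  simp only [toeplitzA_transpose_pow_mulVec_taylorCoeff hf hf0 ha hF hF0]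
  refine congrArg _ (congrArg _ ?_)
  rw [← Finset.sum_subset (Finset.Icc_subset_Icc_right (by omega : n - k - 1 ≤ n - 1)) fun s hs hs' => by
    rw [taylorCoeff_pow_mul_eq_zero_of_le hf hf0 hF hF0 (by grind), mul_zero]]
  refine Finset.sum_congr rfl fun s _ => ?_
  rw [← Complex.exp_neg, ← Complex.exp_nat_mul]
  ring_nf

end Adjoint

section Uniqueness

open Set

variable {E : Type*} [NormedAddCommGroup E] [NormedSpace ℝ E] {a b : ℝ}

theorem eqOn_Icc_of_hasDerivWithinAt_of_lipschitzWith {v : ℝ → E → E} {K : NNReal}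
    (hv : ∀ t, LipschitzWith K (v t)) {f g : ℝ → E}
    (hf : ∀ t ∈ Icc a b, HasDerivWithinAt f (v t (f t)) (Icc a b) t)
    (hg : ∀ t ∈ Icc a b, HasDerivWithinAt g (v t (g t)) (Icc a b) t) (hfg : f b = g b) :
    EqOn f g (Icc a b) := by
  have hIcc : ∀ t ∈ Ioc a b, Icc a b ∈ 𝓝[≤] t := fun t ht =>
    mem_nhdsWithin.mpr ⟨Ioi a, isOpen_Ioi, ht.1, fun x hx => ⟨hx.1.le, hx.2.trans ht.2⟩⟩
  exact ODE_solution_unique_of_mem_Icc_left (s := fun _ => univ) (fun t _ => (hv t).lipschitzOnWith)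
    (fun t ht => (hf t ht).continuousWithinAt)
    (fun t ht => (hf t (Ioc_subset_Icc_self ht)).mono_of_mem_nhdsWithin (hIcc t ht))
    (fun _ _ => mem_univ _) (fun t ht => (hg t ht).continuousWithinAt)
    (fun t ht => (hg t (Ioc_subset_Icc_self ht)).mono_of_mem_nhdsWithin (hIcc t ht))
    (fun _ _ => mem_univ _) hfg

theorem eqOn_Icc_of_hasDerivWithinAt_triangular {n : ℕ} {D : ℝ → (Fin n → E) → Fin n → E}
    (hD : ∀ t x y k, (∀ l, k < l → x l = y l) → D t x k = D t y k) {f g : ℝ → Fin n → E}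
    (hf : ∀ t ∈ Icc a b, ∀ k, HasDerivWithinAt (fun s => f s k) (f t k + D t (f t) k) (Icc a b) t)
    (hg : ∀ t ∈ Icc a b, ∀ k, HasDerivWithinAt (fun s => g s k) (g t k + D t (g t) k) (Icc a b) t)
    (hfg : f b = g b) : EqOn f g (Icc a b) := by
  suffices h : ∀ k, ∀ t ∈ Icc a b, f t k = g t k from fun t ht => funext fun k => h k t ht
  intro k
  induction k using WellFoundedGT.induction with
  | _ k ih =>
  -- the components above `k` already agree, so `f k - g k` solves `x' = x`
  have hsub : EqOn (fun t => f t k - g t k) (fun _ => 0) (Icc a b) := by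
    refine eqOn_Icc_of_hasDerivWithinAt_of_lipschitzWith (v := fun _ x => x)
      (fun _ => LipschitzWith.id) (fun t ht => ?_) (fun t _ => hasDerivWithinAt_const _ _ _)
      (by simp [hfg])
    have := (hf t ht k).sub (hg t ht k)
    rwa [hD t (f t) (g t) k fun l hl => ih l hl t ht, add_sub_add_right_eq_sub] at this
  exact fun t ht => sub_eq_zero.mp (hsub ht)

end Uniqueness

theorem hasDerivWithinAt_taylorCoeff_mul {G : ℂ → ℂ} (hG : AnalyticAt ℂ G 0) {ψ : ℝ → ℂ → ℂ}
    {ψ' : ℂ → ℂ} {S : Set ℝ} {t : ℝ} (ht : t ∈ S) (hψ : ∀ s ∈ S, AnalyticAt ℂ (ψ s) 0)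
    (hψ' : AnalyticAt ℂ ψ' 0)
    (hd : ∀ i, HasDerivWithinAt (fun s => taylorCoeff (ψ s) i) (taylorCoeff ψ' i) S t) (j : ℕ) :
    HasDerivWithinAt (fun s => taylorCoeff (fun z => G z * ψ s z) j)
      (taylorCoeff (fun z => G z * ψ' z) j) S t := by
  rw [taylorCoeff_mul hG hψ']
  exact (HasDerivWithinAt.fun_sum fun i _ => (hd (j - i)).const_mul (taylorCoeff G i)).congr_of_mem
    (fun s hs => taylorCoeff_mul hG (hψ s hs) j) ht

theorem taylorCoeff_sum_mul_pow_sub {n : ℕ} (β : Fin n → ℂ) (k : Fin n) :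
    taylorCoeff (fun z => ∑ i : Fin n, β i * z ^ (n - i.1)) (n - k) = β k := by
  rw [taylorCoeff_sum (F := fun i z => β i * z ^ (n - i.1)) _ fun i _ => by fun_prop]
  simp only [taylorCoeff_const_mul, taylorCoeff_monomial]
  rw [Finset.sum_eq_single k (fun i _ hik => by rw [if_neg (by omega), mul_zero])
    (by simp), if_pos rfl, mul_one]

theorem sum_mul_pow_sub_eq_mul {n : ℕ} (β : Fin n → ℂ) (z : ℂ) :
    ∑ i : Fin n, β i * z ^ (n - i.1) = (∑ i : Fin n, β i * z ^ (n - i.1 - 1)) * z := by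
  rw [Finset.sum_mul]
  refine Finset.sum_congr rfl fun i _ => ?_
  rw [mul_assoc, ← pow_succ, Nat.sub_add_cancel (by omega)]

theorem adjoint_solution_eq_taylorCoeff_general
    (n : ℕ) (T : ℝ) (hT : 0 ≤ T)
    (u : ℝ → ℝ)
    (w : ℂ → ℝ → ℂ)
    (hol : ∀ t ∈ Set.Icc (0 : ℝ) T, DifferentiableOn ℂ (fun z => w z t) (ball (0 : ℂ) 1))
    (h0 : ∀ t ∈ Set.Icc (0 : ℝ) T, w 0 t = 0)
    (hnz : ∀ t ∈ Set.Icc (0 : ℝ) T, ∀ z ∈ ball (0 : ℂ) 1, deriv (fun z => w z t) z ≠ 0)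
    (acoef : ℝ → Fin n → ℂ)
    (hacoef : ∀ t, ∀ k : Fin n, acoef t k = taylorCoeff (fun z => w z t) (k.1 + 1))
    (hqdiff : ∀ k : ℕ, ∀ t ∈ Set.Icc (0 : ℝ) T,
      HasDerivWithinAt (fun s => taylorCoeff (fun z => z / deriv (fun z => w z s) z) k)
        (taylorCoeff (fun z => (z / deriv (fun z => w z t) z) *
          (lkernel (w z t) (u t) +
            2 * Complex.exp ((u t : ℂ) * Complex.I) * w z t /
              (Complex.exp ((u t : ℂ) * Complex.I) - w z t) ^ 2)) k) (Set.Icc 0 T) t)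
    (β : Fin n → ℂ) (q : ℝ → Fin n → ℂ)
    (hq : ∀ t ∈ Set.Icc (0 : ℝ) T, ∀ k : Fin n,
      HasDerivWithinAt (fun s => q s k)
        (q t k + 2 * ∑ s ∈ Finset.Icc 1 (n - 1),
          Complex.exp (-(s : ℂ) * (u t : ℂ) * Complex.I) * ((s : ℂ) + 1) *
            (((toeplitzA (acoef t)).transpose ^ s).mulVec (q t)) k) (Set.Icc 0 T) t)
    (hqT : q T = β) :
    ∀ t ∈ Set.Icc (0 : ℝ) T, ∀ k : Fin n,
      q t k = taylorCoeff (fun z =>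
        (∑ i : Fin n, β i * z ^ (n - i.1)) * deriv (fun z => w z T) z /
          deriv (fun z => w z t) z) (n - k.1) := by
  have hball : ball (0 : ℂ) 1 ∈ 𝓝 0 := ball_mem_nhds 0 one_pos
  have hTmem : T ∈ Set.Icc 0 T := ⟨hT, le_rfl⟩
  have hw : ∀ t ∈ Set.Icc 0 T, AnalyticAt ℂ (fun z => w z t) 0 :=
    fun t ht => (hol t ht).analyticAt hball
  set ψ : ℝ → ℂ → ℂ := fun t z => z / deriv (fun z => w z t) z
  have hψ : ∀ t ∈ Set.Icc 0 T, AnalyticAt ℂ (ψ t) 0 := fun t ht =>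
    analyticAt_id.div (hw t ht).deriv (hnz t ht 0 (mem_ball_self one_pos))
  set G : ℂ → ℂ := fun z => (∑ i : Fin n, β i * z ^ (n - i.1 - 1)) * deriv (fun z => w z T) z
  have hG : AnalyticAt ℂ G 0 := by
    have := (hw T hTmem).deriv
    fun_prop
  have hfactor : ∀ t, (fun z => (∑ i : Fin n, β i * z ^ (n - i.1)) * deriv (fun z => w z T) z /
      deriv (fun z => w z t) z) = fun z => G z * ψ t z := by
    intro t
    funext z
    rw [sum_mul_pow_sub_eq_mul]
    ring
  simp only [hfactor]
  refine fun t ht k => congrFun (eqOn_Icc_of_hasDerivWithinAt_triangular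
    (D := fun t => adjointDrift (acoef t) (u t)) (fun t _ _ _ => adjointDrift_congr _ _) hq
    (g := fun t k => taylorCoeff (fun z => G z * ψ t z) (n - k)) ?_ ?_ ht) k
  · intro t ht k
    have h := hasDerivWithinAt_taylorCoeff_mul hG ht hψ
      ((hψ t ht).fun_mul (analyticAt_lkernel_add (hw t ht) (h0 t ht) (u t)))
      (fun i => hqdiff i t ht) (n - k)
    simp only [← mul_assoc] at h
    rwa [taylorCoeff_mul_lkernel_eq_add_adjointDrift (hG.fun_mul (hψ t ht)) (by simp [ψ])
      (hw t ht) (h0 t ht) (hacoef t) (u t) k] at h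
  · funext k
    rw [hqT, ← taylorCoeff_sum_mul_pow_sub β k]
    refine taylorCoeff_congr ?_ _
    filter_upwards [hball] with z hz
    rw [← congrFun (hfactor T) z, mul_div_cancel_right₀ _ (hnz T hTmem z hz)]

/-- Theorem 1: along the Löwner flow `∂w/∂t = -w(e^{iu(t)}+w)/(e^{iu(t)}-w)`
on `[0,T]`, if `q` solves the adjoint system with terminal value `q(T) = β`, then
`q_k(t) = c_{n-k+1}(t)` where `c_j(t)` is the `j`-th Taylor coefficient of
`z ↦ (β_n z + ⋯ + β_1 zⁿ)·∂_z w(z,T)/∂_z w(z,t)`. -/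
theorem adjoint_solution_eq_taylorCoeff
    (n : ℕ) (hn : 1 ≤ n) (T : ℝ) (hT : 0 ≤ T)
    (u : ℝ → ℝ) (hu : ContinuousOn u (Set.Icc 0 T))
    (w : ℂ → ℝ → ℂ)
    (hinit : ∀ z ∈ ball (0 : ℂ) 1, w z 0 = z)
    (hol : ∀ t ∈ Set.Icc (0 : ℝ) T, DifferentiableOn ℂ (fun z => w z t) (ball (0 : ℂ) 1))
    (hbd : ∀ t ∈ Set.Icc (0 : ℝ) T, ∀ z ∈ ball (0 : ℂ) 1, ‖w z t‖ < 1)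
    (h0 : ∀ t ∈ Set.Icc (0 : ℝ) T, w 0 t = 0)
    (hnz : ∀ t ∈ Set.Icc (0 : ℝ) T, ∀ z ∈ ball (0 : ℂ) 1, deriv (fun z => w z t) z ≠ 0)
    (hode : ∀ z ∈ ball (0 : ℂ) 1, ∀ t ∈ Set.Icc (0 : ℝ) T,
      HasDerivWithinAt (fun s => w z s) (-(w z t) * lkernel (w z t) (u t)) (Set.Icc 0 T) t)
    (acoef : ℝ → Fin n → ℂ)
    (hacoef : ∀ t, ∀ k : Fin n, acoef t k = taylorCoeff (fun z => w z t) (k.1 + 1))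
    (hadiff : ∀ k : ℕ, ∀ t ∈ Set.Icc (0 : ℝ) T,
      HasDerivWithinAt (fun s => taylorCoeff (fun z => w z s) k)
        (taylorCoeff (fun z => -(w z t) * lkernel (w z t) (u t)) k) (Set.Icc 0 T) t)
    (hqdiff : ∀ k : ℕ, ∀ t ∈ Set.Icc (0 : ℝ) T,
      HasDerivWithinAt (fun s => taylorCoeff (fun z => z / deriv (fun z => w z s) z) k)
        (taylorCoeff (fun z => (z / deriv (fun z => w z t) z) *
          (lkernel (w z t) (u t) +
            2 * Complex.exp ((u t : ℂ) * Complex.I) * w z t /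
              (Complex.exp ((u t : ℂ) * Complex.I) - w z t) ^ 2)) k) (Set.Icc 0 T) t)
    (β : Fin n → ℂ) (q : ℝ → Fin n → ℂ)
    (hq : ∀ t ∈ Set.Icc (0 : ℝ) T, ∀ k : Fin n,
      HasDerivWithinAt (fun s => q s k)
        (q t k + 2 * ∑ s ∈ Finset.Icc 1 (n - 1),
          Complex.exp (-(s : ℂ) * (u t : ℂ) * Complex.I) * ((s : ℂ) + 1) *
            (((toeplitzA (acoef t)).transpose ^ s).mulVec (q t)) k) (Set.Icc 0 T) t)
    (hqT : q T = β) :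
    ∀ t ∈ Set.Icc (0 : ℝ) T, ∀ k : Fin n,
      q t k = taylorCoeff (fun z =>
        (∑ i : Fin n, β i * z ^ (n - i.1)) * deriv (fun z => w z T) z /
          deriv (fun z => w z t) z) (n - k.1) :=
  adjoint_solution_eq_taylorCoeff_general n T hT u w hol h0 hnz acoef hacoef hqdiff β q hq hqT
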